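/- Let φ : Γ → Γ' be a harmonic, non-degenerate morphism of M-metrised graphs. Then for every effective divisor D' ∈ Div(Γ'), the rank satisfies r(φ*(D')) ≥ r(D'). -/

import Mathlib

noncomputable section
open scoped Classical

/-! ### Groupification of a cancellative additive commutative monoid -/

variable (M : Type) [AddCancelCommMonoid M]

def gpSetoid : Setoid (M × M) where
  r p q := p.1 + q.2 = q.1 + p.2
  iseqv := by
    refine ⟨fun p => rfl, fun h => h.symm, fun {p q r} h1 h2 => ?_⟩
    have key : (p.1 + r.2) + (q.1 + q.2) = (r.1 + p.2) + (q.1 + q.2) := by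
      calc (p.1 + r.2) + (q.1 + q.2) = (p.1 + q.2) + (q.1 + r.2) := by abel
        _ = (q.1 + p.2) + (r.1 + q.2) := by rw [h1, h2]
        _ = (r.1 + p.2) + (q.1 + q.2) := by abel
    exact add_right_cancel key

/-- The groupification `M^gp` of a cancellative commutative monoid `M`:
the quotient of `M × M` by `(a,b) ~ (c,d) ↔ a + d = c + b` (think of `(a,b)` as `a - b`). -/
def Gp : Type := Quotient (gpSetoid M)

namespace Gp

variable {M}

/-- The element `a - b` of `M^gp`. -/
def mk (a b : M) : Gp M := Quotient.mk (gpSetoid M) (a, b)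

instance : Zero (Gp M) := ⟨mk 0 0⟩

instance : Add (Gp M) :=
  ⟨Quotient.map₂ (fun p q => (p.1 + q.1, p.2 + q.2)) (by
    intro p p' hp q q' hq
    show (p.1 + q.1) + (p'.2 + q'.2) = (p'.1 + q'.1) + (p.2 + q.2)
    calc (p.1 + q.1) + (p'.2 + q'.2) = (p.1 + p'.2) + (q.1 + q'.2) := by abel
      _ = (p'.1 + p.2) + (q'.1 + q.2) := by rw [hp, hq]
      _ = (p'.1 + q'.1) + (p.2 + q.2) := by abel)⟩

instance : Neg (Gp M) :=
  ⟨Quotient.map (fun p => (p.2, p.1)) (by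
    intro p p' hp
    show p.2 + p'.1 = p'.2 + p.1
    calc p.2 + p'.1 = p'.1 + p.2 := by abel
      _ = p.1 + p'.2 := hp.symm
      _ = p'.2 + p.1 := by abel)⟩

lemma mk_add_mk (a b c d : M) : mk a b + mk c d = mk (a + c) (b + d) := rfl
lemma neg_mk (a b : M) : -(mk a b) = mk b a := rfl
lemma zero_def : (0 : Gp M) = mk 0 0 := rfl

instance : AddCommGroup (Gp M) where
  add := (· + ·)
  zero := 0
  neg := Neg.neg
  nsmul := nsmulRec
  zsmul := zsmulRec
  add_assoc := by
    intro a b c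
    induction a using Quotient.inductionOn with | h a =>
    induction b using Quotient.inductionOn with | h b =>
    induction c using Quotient.inductionOn with | h c =>
    exact Quotient.sound (by
      show ((a.1 + b.1) + c.1) + (a.2 + (b.2 + c.2)) = (a.1 + (b.1 + c.1)) + ((a.2 + b.2) + c.2)
      abel)
  zero_add := by
    intro a
    induction a using Quotient.inductionOn with | h a =>
    exact Quotient.sound (by
      show (0 + a.1) + a.2 = a.1 + (0 + a.2)
      abel)
  add_zero := by
    intro a
    induction a using Quotient.inductionOn with | h a =>
    exact Quotient.sound (by
      show (a.1 + 0) + a.2 = a.1 + (a.2 + 0)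
      abel)
  neg_add_cancel := by
    intro a
    induction a using Quotient.inductionOn with | h a =>
    exact Quotient.sound (by
      show (a.2 + a.1) + 0 = 0 + (a.1 + a.2)
      abel)
  add_comm := by
    intro a b
    induction a using Quotient.inductionOn with | h a =>
    induction b using Quotient.inductionOn with | h b =>
    exact Quotient.sound (by
      show (a.1 + b.1) + (b.2 + a.2) = (b.1 + a.1) + (a.2 + b.2)
      abel)

/-- The canonical map `M → M^gp`. -/
def of : M →+ Gp M where
  toFun a := mk a 0
  map_zero' := rfl
  map_add' := by
    intro a b
    exact (Quotient.sound (by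
      show (a + b) + (0 + 0) = (a + b) + 0
      abel) : mk (a + b) 0 = mk (a + b) (0 + 0))

/-- Functoriality of groupification: a monoid homomorphism `f : M →+ N` induces
`f^gp : M^gp →+ N^gp`. -/
def map {N : Type} [AddCancelCommMonoid N] (f : M →+ N) : Gp M →+ Gp N where
  toFun := Quotient.map (fun p => (f p.1, f p.2)) (by
    intro p p' hp
    show f p.1 + f p'.2 = f p'.1 + f p.2
    rw [← f.map_add, ← f.map_add, hp])
  map_zero' := by
    show mk (f 0) (f 0) = mk 0 0
    rw [f.map_zero]
  map_add' := by
    intro a b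
    induction a using Quotient.inductionOn with | h a =>
    induction b using Quotient.inductionOn with | h b =>
    show mk (f (a.1 + b.1)) (f (a.2 + b.2)) = mk (f a.1 + f b.1) (f a.2 + f b.2)
    rw [f.map_add, f.map_add]

end Gp

/-- Sharpness: the only invertible element of `M` is `0`. -/
def Sharp : Prop := ∀ a b : M, a + b = 0 → a = 0

/-! ### Monoid-metrised graphs -/

/-- A graph (Definition 2.3 of the paper) together with a metric taking values in the
monoid `M`: `X` is the finite set of vertices and half-edges, `r` sends an element to its
root vertex, `i` is the pairing involution on half-edges, and `l` assigns a length in `M`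
to every half-edge (and `0` to every vertex). -/
structure MGraph where
  X : Type
  [finX : Fintype X]
  r : X → X
  i : X → X
  r_idem : ∀ x, r (r x) = r x
  i_invol : ∀ x, i (i x) = x
  fix_iff : ∀ x, i x = x ↔ r x = x
  l : X → M
  l_i : ∀ x, l (i x) = l x
  l_zero_iff : ∀ x, l x = 0 ↔ i x = x

attribute [instance] MGraph.finX

namespace MGraph

variable {M} (G : MGraph M)

/-- `x` is a vertex iff it is fixed by the involution. -/
def IsVertex (x : G.X) : Prop := G.i x = x

/-- `x` is a half-edge iff it is not fixed by the involution. -/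
def IsHalfEdge (x : G.X) : Prop := G.i x ≠ x

/-- The vertex set of `G`. -/
abbrev V : Type := { x : G.X // G.IsVertex x }

/-- The root of any element of `X` is a vertex. -/
def rv (x : G.X) : G.V := ⟨G.r x, (G.fix_iff (G.r x)).mpr (G.r_idem x)⟩

/-- Two vertices are adjacent if some edge joins them. -/
def Adj (u v : G.V) : Prop := ∃ x, G.IsHalfEdge x ∧ G.rv x = u ∧ G.rv (G.i x) = v

/-- `G` is connected. (All graphs in the paper are assumed connected.) -/
def IsConnected : Prop := Nonempty G.X ∧ ∀ u v : G.V, Relation.ReflTransGen G.Adj u v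

/-- The degree of a divisor `D : V → ℤ`. -/
def degD (D : G.V → ℤ) : ℤ := ∑ v, D v

/-- A divisor is effective if all its coefficients are nonnegative. -/
def Effective (D : G.V → ℤ) : Prop := ∀ v, 0 ≤ D v

/-- `g : V → M^gp` is piecewise linear if, along every half-edge, the difference of the
values of `g` at the two endpoints is an integer multiple of the length of that edge. -/
def IsPL (g : G.V → Gp M) : Prop :=
  ∀ x, G.IsHalfEdge x → ∃ n : ℤ, g (G.rv x) - g (G.rv (G.i x)) = n • Gp.of (G.l x)

/-- The (outgoing) integer slope of `g` along the half-edge `x`. -/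
def slope (g : G.V → Gp M) (x : G.X) : ℤ :=
  if h : ∃ n : ℤ, g (G.rv x) - g (G.rv (G.i x)) = n • Gp.of (G.l x) then h.choose else 0

/-- The Laplacian of a piecewise linear function. -/
def lap (g : G.V → Gp M) : G.V → ℤ :=
  fun v => ∑ x : G.X, if G.IsHalfEdge x ∧ G.r x = v.val then G.slope g x else 0

/-- Principal divisors: those of the form `Δ(g)` for a piecewise linear `g`. -/
def IsPrincipal (D : G.V → ℤ) : Prop := ∃ g, G.IsPL g ∧ G.lap g = D

/-- The rank of a divisor `D`:
`r(D) = max { k : for every effective divisor F of degree k, |D - F| ≠ ∅ }`. -/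
def rank (D : G.V → ℤ) : ℤ :=
  sSup {k : ℤ | ∀ F : G.V → ℤ, G.Effective F → G.degD F = k →
    ∃ E : G.V → ℤ, G.Effective E ∧ G.IsPrincipal (D - F - E)}

/-- The divisorial gonality: the minimal degree of a divisor of rank at least 1. -/
def dgon : ℤ := sInf {d : ℤ | ∃ D : G.V → ℤ, 1 ≤ G.rank D ∧ G.degD D = d}

end MGraph


/-! ### Morphisms of monoid-metrised graphs -/

namespace MGraph

variable {M : Type} [AddCancelCommMonoid M]

/-- A morphism of `M`-metrised graphs (Definition 3.1 of the paper): vertices map to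
vertices; a half-edge mapping to a half-edge respects roots and the target length is an
integer multiple of the source length; a half-edge collapsed to a vertex has both of its
endpoints mapped to that vertex. -/
structure Hom (G G' : MGraph M) where
  f : G.X → G'.X
  vtx : ∀ x, G.IsVertex x → G'.IsVertex (f x)
  edge : ∀ x, G.IsHalfEdge x → G'.IsHalfEdge (f x) →
    f (G.r x) = G'.r (f x) ∧ f (G.r (G.i x)) = G'.r (G'.i (f x)) ∧
      ∃ n : ℕ, G'.l (f x) = n • G.l x
  contr : ∀ x, G.IsHalfEdge x → G'.IsVertex (f x) →
    f (G.r x) = f x ∧ f (G.r (G.i x)) = f x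

namespace Hom

variable {G G' : MGraph M} (φ : Hom G G')

/-- The induced map on vertices. -/
def vmap (v : G.V) : G'.V := ⟨φ.f v.val, φ.vtx v.val v.property⟩

/-- The slope `μ_φ(x) = l'(φ(x)) / l(x)` of `φ` along a half-edge `x` (zero if `φ`
collapses `x` to a vertex). -/
def mu (x : G.X) : ℕ :=
  if h : G'.IsHalfEdge (φ.f x) ∧ ∃ n : ℕ, G'.l (φ.f x) = n • G.l x then h.2.choose else 0

/-- The multiplicity `m_{φ,v}(e') = ∑_{x ∈ H_v, φ(x) = e'} μ_φ(x)` of a half-edge `e'` of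
`G'` at a vertex `v` of `G`. -/
def multAt (v : G.V) (e' : G'.X) : ℕ :=
  ∑ x : G.X, if G.IsHalfEdge x ∧ G.r x = v.val ∧ φ.f x = e' then φ.mu x else 0

/-- `φ` is harmonic (= horizontally conformal): for every vertex `v`, all half-edges of
`G'` rooted at `φ(v)` have the same multiplicity at `v`. -/
def Harmonic : Prop :=
  ∀ (v : G.V) (e' f' : G'.X), G'.IsHalfEdge e' → G'.IsHalfEdge f' →
    G'.r e' = φ.f v.val → G'.r f' = φ.f v.val → φ.multAt v e' = φ.multAt v f'

/-- The horizontal multiplicity `m_φ(v)` of a vertex (the common value of `m_{φ,v}(e')`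
over half-edges `e'` rooted at `φ(v)`; zero if there are none). -/
def mV (v : G.V) : ℕ :=
  if h : ∃ e', G'.IsHalfEdge e' ∧ G'.r e' = φ.f v.val then φ.multAt v h.choose else 0

/-- `φ` is non-degenerate if every vertex has positive horizontal multiplicity. -/
def Nondeg : Prop := ∀ v : G.V, 0 < φ.mV v

/-- The multiplicity `m_φ(e') = ∑_{v : φ(v) = r'(e')} m_{φ,v}(e')` of a half-edge of `G'`. -/
def mE (e' : G'.X) : ℕ :=
  ∑ v : G.V, if φ.f v.val = G'.r e' then φ.multAt v e' else 0

/-- The degree of a harmonic morphism: `deg(φ) = m_φ(e')` for any half-edge `e'` of `G'`. -/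
def deg : ℕ := if h : ∃ e', G'.IsHalfEdge e' then φ.mE h.choose else 0

/-- The pullback of divisors: `φ*(D') = ∑_v D'(φ(v)) · m_φ(v) · [v]`. -/
def pullback (D' : G'.V → ℤ) : G.V → ℤ :=
  fun v => D' (φ.vmap v) * (φ.mV v : ℤ)

/-- The pushforward of divisors: `φ_*(D) = ∑_v D(v) · [φ(v)]`. -/
def pushforward (D : G.V → ℤ) : G'.V → ℤ :=
  fun v' => ∑ v : G.V, if φ.vmap v = v' then D v else 0

end Hom

/-- A cycle in `G`: a cyclic sequence of half-edges `e_0, …, e_k` in which consecutive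
half-edges are consecutive (the far endpoint of each is the root of the next) and which
never immediately backtracks. -/
def HasCycle (G : MGraph M) : Prop :=
  ∃ (k : ℕ) (e : ZMod (k + 1) → G.X), (∀ j, G.IsHalfEdge (e j)) ∧
    (∀ j, G.r (G.i (e j)) = G.r (e (j + 1))) ∧ (∀ j, e (j + 1) ≠ G.i (e j))

/-- A tree is a connected graph with no cycles. -/
def IsTree (G : MGraph M) : Prop := G.IsConnected ∧ ¬ G.HasCycle

/-- The geometric gonality of `G`: the minimal degree of a harmonic, non-degenerate
morphism from `G` onto an `M`-metrised tree, or `∞` if no such morphism exists. -/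
def ggon (G : MGraph M) : ℕ∞ :=
  sInf {d : ℕ∞ | ∃ (T : MGraph M) (φ : Hom G T),
    T.IsTree ∧ φ.Harmonic ∧ φ.Nondeg ∧ (φ.deg : ℕ∞) = d}

end MGraph

/-! The slope of `g' ∘ φ` along a half-edge `e` is `μ_φ(e)` times the slope of `g'` along `φ(e)`,
so by harmonicity `Δ(g' ∘ φ) = φ*(Δ g')`: the pullback preserves linear equivalence. To bound the
rank of `φ*D'`, push an effective divisor `F` of degree `k` on `Γ` forward to `φ_*F`, of the same
degree; if `D' - φ_*F ~ E' ≥ 0`, then `φ*D' - F ~ φ*E' + (φ*φ_*F - F)`, and this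
is effective because `m_φ ≥ 1` gives `φ*φ_*F ≥ F`. Sharpness makes slopes unique, hence
`deg Δ(g) = 0`; this bounds the ranks on the nonempty graph `Γ`, as the comparison of suprema
requires. -/

section RankPullback

variable {M}

lemma Gp.of_eq_zero {a : M} (h : (Gp.of a : Gp M) = 0) : a = 0 := by
  have h' : a + 0 = 0 + 0 := Quotient.exact h
  simpa using h'

namespace Sharp

lemma eq_zero_of_nsmul_eq_zero (hs : Sharp M) {n : ℕ} {a : M} (hn : n ≠ 0) (h : n • a = 0) :
    a = 0 := by
  obtain ⟨k, rfl⟩ := Nat.exists_eq_succ_of_ne_zero hn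
  rw [succ_nsmul, add_comm] at h
  exact hs a (k • a) h

lemma eq_zero_of_zsmul_of_eq_zero (hs : Sharp M) {a : M} (ha : a ≠ 0) {n : ℤ}
    (h : n • (Gp.of a : Gp M) = 0) : n = 0 := by
  have hnat : n.natAbs • a = 0 := by
    apply Gp.of_eq_zero
    rw [map_nsmul]
    rcases Int.natAbs_eq n with hn | hn
    · rw [← natCast_zsmul, ← hn, h]
    · rw [← natCast_zsmul, ← neg_eq_zero, ← neg_zsmul, ← hn, h]
  by_contra hn
  exact ha (hs.eq_zero_of_nsmul_eq_zero (Int.natAbs_ne_zero.mpr hn) hnat)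

lemma injective_zsmul_of (hs : Sharp M) {a : M} (ha : a ≠ 0) :
    Function.Injective fun n : ℤ => n • (Gp.of a : Gp M) := fun m n h => by
  have := hs.eq_zero_of_zsmul_of_eq_zero ha (n := m - n) (by
    rw [sub_smul]
    exact sub_eq_zero.mpr h)
  omega

end Sharp

namespace MGraph

variable (G : MGraph M)

lemma l_ne_zero {x : G.X} (hx : G.IsHalfEdge x) : G.l x ≠ 0 :=
  fun h => hx ((G.l_zero_iff x).mp h)

lemma isHalfEdge_i {x : G.X} (hx : G.IsHalfEdge x) : G.IsHalfEdge (G.i x) :=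
  fun h => hx ((G.i_invol x).symm.trans h).symm

lemma rv_eq_iff {x : G.X} {v : G.V} : G.rv x = v ↔ G.r x = v.val := Subtype.ext_iff

lemma degD_sub (A B : G.V → ℤ) : G.degD (A - B) = G.degD A - G.degD B :=
  Finset.sum_sub_distrib _ _

lemma degD_single (v : G.V) (k : ℤ) : G.degD (Pi.single v k) = k := by
  simp [degD, Finset.sum_pi_single']

lemma degD_nonneg {D : G.V → ℤ} (hD : G.Effective D) : 0 ≤ G.degD D :=
  Finset.sum_nonneg fun v _ => hD v

variable {G}

lemma slope_eq (hs : Sharp M) {g : G.V → Gp M} {x : G.X} (hx : G.IsHalfEdge x) {n : ℤ}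
    (h : g (G.rv x) - g (G.rv (G.i x)) = n • Gp.of (G.l x)) : G.slope g x = n := by
  have hex : ∃ m : ℤ, g (G.rv x) - g (G.rv (G.i x)) = m • Gp.of (G.l x) := ⟨n, h⟩
  rw [slope, dif_pos hex]
  exact hs.injective_zsmul_of (G.l_ne_zero hx) (hex.choose_spec.symm.trans h)

lemma sub_eq_slope_smul (hs : Sharp M) {g : G.V → Gp M} (hg : G.IsPL g) {x : G.X}
    (hx : G.IsHalfEdge x) :
    g (G.rv x) - g (G.rv (G.i x)) = G.slope g x • Gp.of (G.l x) := by
  obtain ⟨n, hn⟩ := hg x hx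
  rw [slope_eq hs hx hn, hn]

lemma slope_i (hs : Sharp M) {g : G.V → Gp M} (hg : G.IsPL g) {x : G.X}
    (hx : G.IsHalfEdge x) : G.slope g (G.i x) = -G.slope g x := by
  refine slope_eq hs (G.isHalfEdge_i hx) ?_
  rw [G.i_invol, G.l_i, neg_smul, ← sub_eq_slope_smul hs hg hx, neg_sub]

lemma degD_lap (hs : Sharp M) {g : G.V → Gp M} (hg : G.IsPL g) : G.degD (G.lap g) = 0 := by
  have hroot : ∀ x : G.X, (∑ v : G.V, if G.IsHalfEdge x ∧ G.r x = v.val then G.slope g x else 0)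
      = if G.IsHalfEdge x then G.slope g x else 0 := by
    intro x
    by_cases hx : G.IsHalfEdge x
    · simp [hx, ← rv_eq_iff]
    · simp [hx]
  simp only [degD, lap]
  rw [Finset.sum_comm, Finset.sum_congr rfl fun x _ => hroot x]
  refine Finset.sum_involution (fun x _ => G.i x) (fun x _ => ?_)
    (fun x _ hfx hix => hfx (if_neg (not_not_intro hix))) (fun _ _ => Finset.mem_univ _)
    (fun x _ => G.i_invol x)
  by_cases hx : G.IsHalfEdge x
  · rw [if_pos hx, if_pos (G.isHalfEdge_i hx), slope_i hs hg hx, add_neg_cancel]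
  · have hix : G.i x = x := not_not.mp hx
    rw [if_neg hx, hix, if_neg hx, add_zero]

end MGraph

namespace MGraph.Hom

variable {G G' : MGraph M} (φ : Hom G G')

lemma mu_eq_zero {x : G.X} (hx : ¬ G'.IsHalfEdge (φ.f x)) : φ.mu x = 0 := by
  rw [mu, dif_neg fun h => hx h.1]

lemma l_f_eq_mu_nsmul {x : G.X} (hx : G.IsHalfEdge x) (hfx : G'.IsHalfEdge (φ.f x)) :
    G'.l (φ.f x) = φ.mu x • G.l x := by
  have h : G'.IsHalfEdge (φ.f x) ∧ ∃ n : ℕ, G'.l (φ.f x) = n • G.l x :=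
    ⟨hfx, (φ.edge x hx hfx).2.2⟩
  rw [mu, dif_pos h]
  exact h.2.choose_spec

lemma vmap_rv {x : G.X} {y : G'.X} (h : φ.f (G.r x) = G'.r y) : φ.vmap (G.rv x) = G'.rv y :=
  Subtype.ext h

lemma comp_sub_comp (hs : Sharp M) {g' : G'.V → Gp M} (hg' : G'.IsPL g') {x : G.X}
    (hx : G.IsHalfEdge x) :
    (g' ∘ φ.vmap) (G.rv x) - (g' ∘ φ.vmap) (G.rv (G.i x))
      = (G'.slope g' (φ.f x) * φ.mu x) • Gp.of (G.l x) := by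
  by_cases hfx : G'.IsHalfEdge (φ.f x)
  · obtain ⟨hroot, hroot_i, -⟩ := φ.edge x hx hfx
    rw [Function.comp_apply, Function.comp_apply, φ.vmap_rv hroot, φ.vmap_rv hroot_i,
      sub_eq_slope_smul hs hg' hfx, φ.l_f_eq_mu_nsmul hx hfx, map_nsmul, mul_smul, natCast_zsmul]
  · obtain ⟨hroot, hroot_i⟩ := φ.contr x hx (not_not.mp hfx)
    have : φ.vmap (G.rv x) = φ.vmap (G.rv (G.i x)) := Subtype.ext (hroot.trans hroot_i.symm)
    rw [Function.comp_apply, Function.comp_apply, this, sub_self, φ.mu_eq_zero hfx, Nat.cast_zero,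
      mul_zero, zero_smul]

lemma isPL_comp (hs : Sharp M) {g' : G'.V → Gp M} (hg' : G'.IsPL g') : G.IsPL (g' ∘ φ.vmap) :=
  fun _ hx => ⟨_, φ.comp_sub_comp hs hg' hx⟩

lemma slope_comp (hs : Sharp M) {g' : G'.V → Gp M} (hg' : G'.IsPL g') {x : G.X}
    (hx : G.IsHalfEdge x) : G.slope (g' ∘ φ.vmap) x = G'.slope g' (φ.f x) * φ.mu x :=
  slope_eq hs hx (φ.comp_sub_comp hs hg' hx)

variable {φ}

lemma multAt_eq (hφ : φ.Harmonic) (v : G.V) (e' : G'.X) :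
    φ.multAt v e' = if G'.IsHalfEdge e' ∧ G'.r e' = φ.f v.val then φ.mV v else 0 := by
  split_ifs with he'
  · have hex : ∃ x', G'.IsHalfEdge x' ∧ G'.r x' = φ.f v.val := ⟨e', he'⟩
    rw [mV, dif_pos hex]
    exact hφ v e' hex.choose he'.1 hex.choose_spec.1 he'.2 hex.choose_spec.2
  · refine Finset.sum_eq_zero fun x _ => ite_eq_right_iff.mpr ?_
    rintro ⟨hx, hr, rfl⟩
    by_contra hmu
    have hfx : G'.IsHalfEdge (φ.f x) := fun h => hmu (φ.mu_eq_zero (not_not_intro h))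
    exact he' ⟨hfx, hr ▸ (φ.edge x hx hfx).1.symm⟩

lemma lap_comp (hs : Sharp M) (hφ : φ.Harmonic) {g' : G'.V → Gp M} (hg' : G'.IsPL g') :
    G.lap (g' ∘ φ.vmap) = φ.pullback (G'.lap g') := by
  funext v
  calc G.lap (g' ∘ φ.vmap) v
      = ∑ x : G.X, if G.IsHalfEdge x ∧ G.r x = v.val
          then G'.slope g' (φ.f x) * φ.mu x else 0 :=
        Finset.sum_congr rfl fun x _ => by
          split_ifs with hx
          exacts [φ.slope_comp hs hg' hx.1, rfl]
    _ = ∑ e' : G'.X, G'.slope g' e' * φ.multAt v e' := by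
        simp only [multAt, Nat.cast_sum, Nat.cast_ite, Nat.cast_zero, Finset.mul_sum, mul_ite,
          mul_zero]
        rw [Finset.sum_comm]
        refine Finset.sum_congr rfl fun x _ => ?_
        by_cases hx : G.IsHalfEdge x ∧ G.r x = v.val
        · simp [hx]
        · simp [← and_assoc, hx]
    _ = ∑ e' : G'.X, (if G'.IsHalfEdge e' ∧ G'.r e' = φ.f v.val then G'.slope g' e' else 0)
          * φ.mV v := by
        refine Finset.sum_congr rfl fun e' _ => ?_
        rw [multAt_eq hφ]
        split_ifs <;> simp
    _ = φ.pullback (G'.lap g') v := by rw [← Finset.sum_mul]; rfl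

lemma isPrincipal_pullback (hs : Sharp M) (hφ : φ.Harmonic) {D' : G'.V → ℤ}
    (hD' : G'.IsPrincipal D') : G.IsPrincipal (φ.pullback D') := by
  obtain ⟨g', hg', rfl⟩ := hD'
  exact ⟨g' ∘ φ.vmap, φ.isPL_comp hs hg', lap_comp hs hφ hg'⟩

variable (φ)

lemma pullback_sub (A B : G'.V → ℤ) : φ.pullback (A - B) = φ.pullback A - φ.pullback B := by
  funext v
  simp only [pullback, Pi.sub_apply, sub_mul]

lemma effective_pullback {D' : G'.V → ℤ} (hD' : G'.Effective D') : G.Effective (φ.pullback D') :=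
  fun _ => mul_nonneg (hD' _) (Int.natCast_nonneg _)

lemma degD_pushforward (D : G.V → ℤ) : G'.degD (φ.pushforward D) = G.degD D := by
  simp only [degD, pushforward]
  rw [Finset.sum_comm]
  simp

lemma effective_pushforward {D : G.V → ℤ} (hD : G.Effective D) :
    G'.Effective (φ.pushforward D) :=
  fun _ => Finset.sum_nonneg fun v _ => by split_ifs; exacts [hD v, le_rfl]

lemma le_pullback_pushforward (hnd : φ.Nondeg) {D : G.V → ℤ} (hD : G.Effective D) :
    D ≤ φ.pullback (φ.pushforward D) := by
  intro v
  have hpush : D v ≤ φ.pushforward D (φ.vmap v) := by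
    simpa [pushforward] using
      Finset.single_le_sum (f := fun w => if φ.vmap w = φ.vmap v then D w else 0)
        (fun w _ => by split_ifs; exacts [hD w, le_rfl]) (Finset.mem_univ v)
  calc D v = D v * 1 := (mul_one _).symm
    _ ≤ φ.pushforward D (φ.vmap v) * φ.mV v :=
        mul_le_mul hpush (by exact_mod_cast hnd v) zero_le_one ((hD v).trans hpush)

end MGraph.Hom

namespace MGraph

variable (G : MGraph M)

def rankSet (D : G.V → ℤ) : Set ℤ :=
  {k | ∀ F : G.V → ℤ, G.Effective F → G.degD F = k →
    ∃ E : G.V → ℤ, G.Effective E ∧ G.IsPrincipal (D - F - E)}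

lemma rank_eq_sSup_rankSet (D : G.V → ℤ) : G.rank D = sSup (G.rankSet D) := rfl

lemma neg_one_mem_rankSet (D : G.V → ℤ) : -1 ∈ G.rankSet D := fun F hF hdeg => by
  have := G.degD_nonneg hF
  omega

variable {G}

lemma le_degD_of_mem_rankSet (hs : Sharp M) (v₀ : G.V) {D : G.V → ℤ} {k : ℤ} (hk₀ : 0 ≤ k)
    (hk : k ∈ G.rankSet D) : k ≤ G.degD D := by
  obtain ⟨E, hE, g, hg, hlap⟩ :=
    hk (Pi.single v₀ k) ((Pi.single_nonneg (α := fun _ => ℤ)).mpr hk₀) (G.degD_single v₀ k)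
  have hdeg := degD_lap hs hg
  rw [hlap, degD_sub, degD_sub, degD_single] at hdeg
  have := G.degD_nonneg hE
  omega

lemma bddAbove_rankSet (hs : Sharp M) [Nonempty G.V] (D : G.V → ℤ) : BddAbove (G.rankSet D) :=
  ⟨max (G.degD D) 0, fun k hk => by
    rcases le_or_gt 0 k with hk₀ | hk₀
    · exact le_max_of_le_left (le_degD_of_mem_rankSet hs (Classical.arbitrary _) hk₀ hk)
    · exact le_max_of_le_right hk₀.le⟩

lemma Hom.mem_rankSet_pullback {G' : MGraph M} {φ : Hom G G'} (hs : Sharp M) (hφ : φ.Harmonic)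
    (hnd : φ.Nondeg) {D' : G'.V → ℤ} {k : ℤ} (hk : k ∈ G'.rankSet D') :
    k ∈ G.rankSet (φ.pullback D') := by
  intro F hF hdeg
  obtain ⟨E', hE', hprin⟩ := hk (φ.pushforward F) (φ.effective_pushforward hF)
    (by rw [φ.degD_pushforward, hdeg])
  refine ⟨φ.pullback E' + (φ.pullback (φ.pushforward F) - F),
    add_nonneg (φ.effective_pullback hE') (sub_nonneg.mpr (φ.le_pullback_pushforward hnd hF)), ?_⟩
  convert isPrincipal_pullback hs hφ hprin using 1
  simp only [pullback_sub]
  abel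

end MGraph

end RankPullback

theorem MGraph.Hom.rank_pullback_ge_general (M : Type) [AddCancelCommMonoid M]
    (hsharp : Sharp M) (G G' : MGraph M) (hG : G.IsConnected)
    (φ : MGraph.Hom G G') (hφ : φ.Harmonic) (hnd : φ.Nondeg)
    (D' : G'.V → ℤ) :
    G'.rank D' ≤ G.rank (φ.pullback D') := by
  obtain ⟨x⟩ := hG.1
  have : Nonempty G.V := ⟨G.rv x⟩
  rw [rank_eq_sSup_rankSet, rank_eq_sSup_rankSet]
  exact csSup_le_csSup (G.bddAbove_rankSet hsharp _) ⟨-1, G'.neg_one_mem_rankSet D'⟩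
    fun _ => mem_rankSet_pullback hsharp hφ hnd

/-- **Lemma 3.9.** Let `φ : Γ → Γ'` be a harmonic, non-degenerate morphism of
`M`-metrised graphs. Then for every effective divisor `D'` on `Γ'` we have
`r(φ*(D')) ≥ r(D')`. -/
theorem MGraph.Hom.rank_pullback_ge (M : Type) [AddCancelCommMonoid M]
    (hsharp : Sharp M) (G G' : MGraph M) (hG : G.IsConnected) (hG' : G'.IsConnected)
    (φ : MGraph.Hom G G') (hφ : φ.Harmonic) (hnd : φ.Nondeg)
    (D' : G'.V → ℤ) (hD' : G'.Effective D') :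
    G'.rank D' ≤ G.rank (φ.pullback D') :=
  MGraph.Hom.rank_pullback_ge_general M hsharp G G' hG φ hφ hnd D'
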